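/- Let K be a formally real field of characteristic not 2. Then the set of nonzero sums of squares of K together with 0 is a preordering of K and equals the intersection of all orderings of K. -/

import Mathlib

/-!
Every ordering contains the squares (as `x` or `-x` lies in it), hence all sums of squares, and
so `-1` is not a sum of squares. Conversely, if `x` is not in a preordering `T`, then
`T - xT` is again a preordering, since `-1 ∈ T - xT` would force `x ∈ T`. By Zorn it extends to a
maximal preordering, which is an ordering; that ordering contains `-x`, so it omits `x ≠ 0`.
-/

/-- A preordering of a field `K`: additively and multiplicatively closed,
contains all squares, and does not contain `-1`. -/
def IsPreordering (K : Type*) [Field K] (T : Set K) : Prop :=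
  (∀ x ∈ T, ∀ y ∈ T, x + y ∈ T) ∧ (∀ x ∈ T, ∀ y ∈ T, x * y ∈ T) ∧
    (∀ x : K, x ^ 2 ∈ T) ∧ (-1 : K) ∉ T

/-- An ordering of a field `K`: additively and multiplicatively closed,
with `P ∪ -P = K` and `P ∩ -P = {0}`. -/
def IsOrdering (K : Type*) [Field K] (P : Set K) : Prop :=
  (∀ x ∈ P, ∀ y ∈ P, x + y ∈ P) ∧ (∀ x ∈ P, ∀ y ∈ P, x * y ∈ P) ∧
    (∀ x : K, x ∈ P ∨ -x ∈ P) ∧ (∀ x : K, x ∈ P → -x ∈ P → x = 0)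

section

variable {K : Type*} [Field K]

def preorderingAdjoin (T : Set K) (a : K) : Set K :=
  {y | ∃ p ∈ T, ∃ q ∈ T, y = p + a * q}

namespace IsPreordering

variable {T : Set K}

lemma mul_self_mem (hT : IsPreordering K T) (a : K) : a * a ∈ T := by
  simpa [sq] using hT.2.2.1 a

lemma zero_mem (hT : IsPreordering K T) : (0 : K) ∈ T := by
  simpa using hT.mul_self_mem 0

lemma one_mem (hT : IsPreordering K T) : (1 : K) ∈ T := by
  simpa using hT.mul_self_mem 1

lemma mem_of_isSumSq (hT : IsPreordering K T) {x : K} (hx : IsSumSq x) : x ∈ T := by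
  induction hx with
  | zero => exact hT.zero_mem
  | sq_add a _ ih => exact hT.1 _ (hT.mul_self_mem a) _ ih

lemma subset_preorderingAdjoin (hT : IsPreordering K T) (a : K) :
    T ⊆ preorderingAdjoin T a :=
  fun p hp => ⟨p, hp, 0, hT.zero_mem, by ring⟩

lemma mem_preorderingAdjoin_self (hT : IsPreordering K T) (a : K) :
    a ∈ preorderingAdjoin T a :=
  ⟨0, hT.zero_mem, 1, hT.one_mem, by ring⟩

/-- If `-1 = p + a q` with `p, q ∈ T`, then `q ≠ 0` and `-a = (1 + p) q (q⁻¹)²`. -/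
lemma neg_mem_of_neg_one_mem_preorderingAdjoin (hT : IsPreordering K T) {a : K}
    (h : (-1 : K) ∈ preorderingAdjoin T a) : -a ∈ T := by
  obtain ⟨p, hp, q, hq, hpq⟩ := h
  have hq0 : q ≠ 0 := by
    rintro rfl
    exact hT.2.2.2 (by simpa [hpq] using hp)
  have key : -a = (1 + p) * q * q⁻¹ ^ 2 := by
    field_simp
    linear_combination hpq
  rw [key]
  exact hT.2.1 _ (hT.2.1 _ (hT.1 _ hT.one_mem _ hp) _ hq) _ (hT.2.2.1 _)

lemma preorderingAdjoin (hT : IsPreordering K T) {a : K} (ha : -a ∉ T) :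
    IsPreordering K (preorderingAdjoin T a) := by
  refine ⟨?_, ?_, fun x => hT.subset_preorderingAdjoin a (hT.2.2.1 x),
    fun h => ha (hT.neg_mem_of_neg_one_mem_preorderingAdjoin h)⟩
  all_goals obtain ⟨hadd, hmul, hsq, -⟩ := hT
  · rintro _ ⟨p, hp, q, hq, rfl⟩ _ ⟨p', hp', q', hq', rfl⟩
    exact ⟨p + p', hadd _ hp _ hp', q + q', hadd _ hq _ hq', by ring⟩
  · rintro _ ⟨p, hp, q, hq, rfl⟩ _ ⟨p', hp', q', hq', rfl⟩
    exact ⟨p * p' + a ^ 2 * (q * q'),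
      hadd _ (hmul _ hp _ hp') _ (hmul _ (hsq a) _ (hmul _ hq _ hq')),
      p * q' + p' * q, hadd _ (hmul _ hp _ hq') _ (hmul _ hp' _ hq), by ring⟩

lemma eq_zero_of_mem_of_neg_mem (hT : IsPreordering K T) {x : K} (hx : x ∈ T)
    (hnx : -x ∈ T) : x = 0 := by
  by_contra hx0
  have key : (-1 : K) = x * -x * x⁻¹ ^ 2 := by field_simp
  exact hT.2.2.2 (key ▸ hT.2.1 _ (hT.2.1 _ hx _ hnx) _ (hT.2.2.1 _))

lemma isOrdering_of_maximal (hT : Maximal (IsPreordering K) T) : IsOrdering K T := by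
  refine ⟨hT.prop.1, hT.prop.2.1, fun x => ?_, fun x => hT.prop.eq_zero_of_mem_of_neg_mem⟩
  by_contra! hx
  have hext := hT.prop.preorderingAdjoin hx.2
  exact hx.1 (hT.2 hext (hT.prop.subset_preorderingAdjoin x)
    (hT.prop.mem_preorderingAdjoin_self x))

lemma sUnion_of_isChain {c : Set (Set K)} (hc : ∀ Q ∈ c, IsPreordering K Q)
    (hchain : IsChain (· ⊆ ·) c) (hne : c.Nonempty) : IsPreordering K (⋃₀ c) := by
  refine ⟨?_, ?_, fun x => ?_, ?_⟩
  · rintro x ⟨Q, hQ, hxQ⟩ y ⟨Q', hQ', hyQ'⟩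
    obtain ⟨R, hR, hQR, hQ'R⟩ := hchain.directedOn Q hQ Q' hQ'
    exact ⟨R, hR, (hc R hR).1 x (hQR hxQ) y (hQ'R hyQ')⟩
  · rintro x ⟨Q, hQ, hxQ⟩ y ⟨Q', hQ', hyQ'⟩
    obtain ⟨R, hR, hQR, hQ'R⟩ := hchain.directedOn Q hQ Q' hQ'
    exact ⟨R, hR, (hc R hR).2.1 x (hQR hxQ) y (hQ'R hyQ')⟩
  · obtain ⟨Q, hQ⟩ := hne
    exact ⟨Q, hQ, (hc Q hQ).2.2.1 x⟩
  · rintro ⟨Q, hQ, hQ1⟩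
    exact (hc Q hQ).2.2.2 hQ1

lemma exists_isOrdering_superset (hT : IsPreordering K T) :
    ∃ P, IsOrdering K P ∧ T ⊆ P := by
  obtain ⟨P, hTP, hP⟩ := zorn_subset_nonempty {Q | IsPreordering K Q}
    (fun c hc hchain hne => ⟨⋃₀ c, sUnion_of_isChain hc hchain hne,
      fun _ => Set.subset_sUnion_of_mem⟩) T hT
  exact ⟨P, isOrdering_of_maximal hP, hTP⟩

lemma mem_of_forall_isOrdering (hT : IsPreordering K T) {x : K}
    (hx : ∀ P, IsOrdering K P → T ⊆ P → x ∈ P) : x ∈ T := by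
  by_contra hxT
  obtain ⟨P, hP, hsub⟩ :=
    (hT.preorderingAdjoin (a := -x) (by rwa [neg_neg])).exists_isOrdering_superset
  have hx0 : x = 0 :=
    hP.2.2.2 x (hx P hP (hT.subset_preorderingAdjoin _ |>.trans hsub))
      (hsub (hT.mem_preorderingAdjoin_self _))
  exact hxT (hx0 ▸ hT.zero_mem)

end IsPreordering

lemma IsOrdering.isPreordering {P : Set K} (hP : IsOrdering K P) : IsPreordering K P := by
  obtain ⟨hadd, hmul, htot, hanti⟩ := hP
  have hsq (x : K) : x ^ 2 ∈ P := by
    rcases htot x with h | h <;> simpa [sq] using hmul _ h _ h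
  exact ⟨hadd, hmul, hsq, fun h => one_ne_zero (hanti 1 (by simpa using hsq 1) h)⟩

lemma isPreordering_setOf_isSumSq (h : ¬IsSumSq (-1 : K)) :
    IsPreordering K {x | IsSumSq x} :=
  ⟨fun _ hx _ hy => hx.add hy, fun _ hx _ hy => hx.mul hy,
    fun x => (IsSquare.sq x).isSumSq, h⟩

end

theorem sumSq_isPreordering_and_eq_iInter_orderings_general
    (K : Type*) [Field K]
    (hreal : ∃ P : Set K, IsOrdering K P) :
    IsPreordering K {x : K | IsSumSq x} ∧
      {x : K | IsSumSq x} = ⋂ P ∈ {P : Set K | IsOrdering K P}, P := by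
  obtain ⟨P₀, hP₀⟩ := hreal
  have hsumSq : IsPreordering K {x | IsSumSq x} := isPreordering_setOf_isSumSq fun h =>
    hP₀.isPreordering.2.2.2 (hP₀.isPreordering.mem_of_isSumSq h)
  refine ⟨hsumSq, Set.Subset.antisymm ?_ ?_⟩
  · intro x hx
    simp only [Set.mem_iInter]
    exact fun P hP => hP.isPreordering.mem_of_isSumSq hx
  · intro x hx
    simp only [Set.mem_iInter] at hx
    exact hsumSq.mem_of_forall_isOrdering fun P hP _ => hx P hP

/-- In a formally real field the set of sums of squares (i.e. the nonzero sums of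
squares together with 0) is a preordering and is the intersection of all orderings. -/
theorem sumSq_isPreordering_and_eq_iInter_orderings
    (K : Type*) [Field K] (hK : ringChar K ≠ 2)
    (hreal : ∃ P : Set K, IsOrdering K P) :
    IsPreordering K {x : K | IsSumSq x} ∧
      {x : K | IsSumSq x} = ⋂ P ∈ {P : Set K | IsOrdering K P}, P :=
  sumSq_isPreordering_and_eq_iInter_orderings_general K hreal
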